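/- arXiv:2206.00351 — 2 statements merged into one kernel-verified Lean document; each statement's English description precedes it below -/
import Mathlib

section
/- There exists a countable universal graph; that is, there exists a simple graph R on a countably infinite vertex set such that for every simple graph G on an at most countable vertex set there is a graph embedding of G into R. -/
/-!
Take as vertices the pairs `(n, S)` with `n ∈ ℕ` and `S` a finite set of naturals, and join two
of them when the smaller first coordinate lies in the set of the other. A graph `H` on `ℕ` embeds
by `n ↦ (n, {m < n | m ~ n in H})`, and a countable graph embeds into a graph on `ℕ` by
transport along an injection into `ℕ`. No extension property is needed, because each vertex
carries its own list of earlier neighbours.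
-/

open Finset

section EarlierNeighbors

variable (α : Type*) [LinearOrder α]

def earlierNeighborsGraph : SimpleGraph (α × Finset α) where
  Adj p q := (q.1 < p.1 ∧ q.1 ∈ p.2) ∨ (p.1 < q.1 ∧ p.1 ∈ q.2)
  symm := ⟨fun _ _ h => h.symm⟩
  loopless := ⟨fun _ h => by rcases h with h | h <;> exact lt_irrefl _ h.1⟩

variable {α}

lemma earlierNeighborsGraph_adj_of_lt {p q : α × Finset α} (h : q.1 < p.1) :
    (earlierNeighborsGraph α).Adj p q ↔ q.1 ∈ p.2 := by
  simp [earlierNeighborsGraph, h, lt_asymm h]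

variable [LocallyFiniteOrderBot α]

open Classical in
noncomputable def earlierNeighbors (H : SimpleGraph α) (n : α) : Finset α :=
  (Iio n).filter (H.Adj · n)

lemma mem_earlierNeighbors {H : SimpleGraph α} {m n : α} :
    m ∈ earlierNeighbors H n ↔ m < n ∧ H.Adj m n := by
  classical
  simp [earlierNeighbors]

lemma adj_iff_mem_earlierNeighbors (H : SimpleGraph α) {m n : α} (h : m < n) :
    H.Adj n m ↔ m ∈ earlierNeighbors H n := by
  rw [mem_earlierNeighbors, H.adj_comm]
  exact (and_iff_right h).symm

noncomputable def embeddingEarlierNeighborsGraph (H : SimpleGraph α) :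
    H ↪g earlierNeighborsGraph α where
  toFun n := (n, earlierNeighbors H n)
  inj' _ _ h := congrArg Prod.fst h
  map_rel_iff' {a b} := by
    rcases lt_trichotomy a b with h | rfl | h
    · rw [SimpleGraph.adj_comm, H.adj_comm]
      exact (earlierNeighborsGraph_adj_of_lt h).trans (adj_iff_mem_earlierNeighbors H h).symm
    · simp
    · exact (earlierNeighborsGraph_adj_of_lt h).trans (adj_iff_mem_earlierNeighbors H h).symm

end EarlierNeighbors

/-- There exists a countable universal graph: a simple graph `R` on a countably
infinite vertex set such that every simple graph on an at most countable
vertex set embeds into `R`. -/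
theorem exists_countable_universal_graph :
    ∃ (V : Type) (R : SimpleGraph V), Cardinal.mk V = Cardinal.aleph0 ∧
      ∀ (W : Type) (G : SimpleGraph W),
        Cardinal.mk W ≤ Cardinal.aleph0 → Nonempty (G ↪g R) := by
  refine ⟨ℕ × Finset ℕ, earlierNeighborsGraph ℕ, Cardinal.mk_eq_aleph0 _, fun W G hW => ?_⟩
  have : Countable W := Cardinal.mk_le_aleph0_iff.mp hW
  obtain ⟨f, hf⟩ := exists_injective_nat W
  let e : W ↪ ℕ := ⟨f, hf⟩
  exact ⟨(embeddingEarlierNeighborsGraph (G.map e)).comp (SimpleGraph.Embedding.map e G)⟩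
end

section
/- If λ is an uncountable cardinal satisfying 2^{<λ} = λ (that is, 2^μ ≤ λ for every cardinal μ < λ), then there exists a universal graph of size λ: a simple graph on a vertex set of cardinality λ such that every simple graph on a vertex set of cardinality at most λ admits a graph embedding into it. -/
/-!
Enumerate the vertices of a graph `G` on at most `λ` vertices along the initial ordinal of `λ`,
and record each vertex `w` as the pair `(position of w, positions of the earlier neighbours of w)`.
Adjacency is then readable from these pairs alone, so all such graphs embed into the single graph
whose vertices are the pairs `(a, s)` with `s ⊆ Iio a`, where `(a, s)` and `(b, t)` are adjacent
iff `a ∈ t` or `b ∈ s`. Since each `Iio a` has fewer than `λ` elements, `2^{<λ} = λ` bounds its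
number of vertices by `λ · λ = λ`.
-/

open Cardinal Set

namespace SimpleGraph

def initialSegmentGraph (α : Type*) [Preorder α] :
    SimpleGraph {p : α × Set α // p.2 ⊆ Iio p.1} where
  Adj p q := p.1.1 ∈ q.1.2 ∨ q.1.1 ∈ p.1.2
  symm := ⟨fun _ _ => Or.symm⟩
  loopless := ⟨fun p h => lt_irrefl p.1.1 (h.elim (p.2 ·) (p.2 ·))⟩

variable {α W : Type*}

def toInitialSegmentGraph [LinearOrder α] (G : SimpleGraph W) (f : W ↪ α) :
    G ↪g initialSegmentGraph α where
  toFun w := ⟨(f w, f '' {v | f v < f w ∧ G.Adj v w}), by rintro _ ⟨v, hv, rfl⟩; exact hv.1⟩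
  inj' _ _ h := f.injective (congrArg (·.1.1) h)
  map_rel_iff' {v w} := by
    change f v ∈ f '' _ ∨ f w ∈ f '' _ ↔ _
    simp only [f.injective.mem_set_image, mem_ofPred_eq]
    rcases lt_trichotomy (f v) (f w) with h | h | h
    · simp [h, h.not_gt]
    · simp [f.injective h]
    · simp [h, h.not_gt, G.adj_comm]

theorem mk_initialSegmentGraph_vertices [Preorder α] (hα : ℵ₀ ≤ #α)
    (h : ∀ a : α, 2 ^ #(Iio a) ≤ #α) : #{p : α × Set α // p.2 ⊆ Iio p.1} = #α := by
  refine le_antisymm ?_ (mk_le_of_injective (f := fun a => ⟨(a, ∅), empty_subset _⟩)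
    fun _ _ h => congrArg (·.1.1) h)
  calc #{p : α × Set α // p.2 ⊆ Iio p.1}
      = sum fun a : α => #(𝒫 Iio a) := by
        rw [mk_congr (Equiv.subtypeProdEquivSigmaSubtype fun a s => s ⊆ Iio a), mk_sigma]; rfl
    _ ≤ sum fun _ : α => #α := sum_le_sum _ _ fun a => (mk_powerset _).trans_le (h a)
    _ = #α := by rw [sum_const', mul_eq_self hα]

end SimpleGraph

open SimpleGraph in
/-- If `λ` is an uncountable cardinal with `2^{<λ} = λ` (i.e. `2^μ ≤ λ` for all
`μ < λ`), then there is a universal graph of size `λ`: a simple graph on a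
vertex set of cardinality `λ` into which every simple graph on a vertex set of
cardinality at most `λ` embeds. -/
theorem exists_universal_graph_of_continuum_hypothesis_below
    (lam : Cardinal) (h_unc : Cardinal.aleph0 < lam)
    (h_pow : ∀ mu : Cardinal, mu < lam → 2 ^ mu ≤ lam) :
    ∃ (V : Type) (R : SimpleGraph V), Cardinal.mk V = lam ∧
      ∀ (W : Type) (G : SimpleGraph W),
        Cardinal.mk W ≤ lam → Nonempty (G ↪g R) := by
  have hα : #lam.ord.ToType = lam := mk_ord_toType lam
  have h_pow_Iio (a : lam.ord.ToType) : 2 ^ #(Iio a) ≤ #lam.ord.ToType :=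
    (h_pow _ (by simpa using mk_Iio_lt a)).trans_eq hα.symm
  refine ⟨_, initialSegmentGraph lam.ord.ToType,
    (mk_initialSegmentGraph_vertices (h_unc.le.trans_eq hα.symm) h_pow_Iio).trans hα, fun W G hW => ?_⟩
  obtain ⟨f⟩ := (Cardinal.le_def W lam.ord.ToType).1 (hW.trans_eq hα.symm)
  exact ⟨G.toInitialSegmentGraph f⟩
end
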